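/- Let G be a second countable locally compact Hausdorff principal groupoid with left Haar system, and z ∈ G⁰. Then the following are equivalent: (1) the orbit [z] is not locally closed; (2) for every k ≥ 1, the constant sequence {z,z,...} converges k-times in G⁰/G to z; (3) for every open neighborhood V of z in G⁰, λ_z(r⁻¹(V)) = ∞; (4) for every open neighborhood V of z in G⁰, r⁻¹(V) ∩ s⁻¹({z}) is not relatively compact. -/

import Mathlib

open MeasureTheory Filter Topology ENNReal Classical

/-- A topological groupoid, given by range/source maps, a (total) partial-multiplication
`mul` (only meaningful on composable pairs, i.e. when `s γ = r α`) and inversion. -/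
structure TopGroupoid (G : Type*) [TopologicalSpace G] where
  r : G → G
  s : G → G
  mul : G → G → G
  inv : G → G
  r_mul : ∀ γ α, s γ = r α → r (mul γ α) = r γ
  s_mul : ∀ γ α, s γ = r α → s (mul γ α) = s α
  mul_assoc' : ∀ γ α β, s γ = r α → s α = r β → mul (mul γ α) β = mul γ (mul α β)
  r_inv : ∀ γ, r (inv γ) = s γ
  s_inv : ∀ γ, s (inv γ) = r γ
  inv_inv' : ∀ γ, inv (inv γ) = γ
  mul_inv' : ∀ γ, mul γ (inv γ) = r γ
  inv_mul' : ∀ γ, mul (inv γ) γ = s γ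
  unit_mul : ∀ γ, mul (r γ) γ = γ
  mul_unit : ∀ γ, mul γ (s γ) = γ
  continuous_r : Continuous r
  continuous_s : Continuous s
  continuous_inv : Continuous inv
  continuous_mul : ContinuousOn (fun p : G × G => mul p.1 p.2) {p | s p.1 = r p.2}

namespace TopGroupoid

variable {G : Type*} [TopologicalSpace G] (Gd : TopGroupoid G)

/-- The unit space `G⁰` of the groupoid. -/
def units : Set G := Set.range Gd.r

/-- The orbit `[z] = r(s⁻¹{z})` of a unit `z`. -/
def orbit (z : G) : Set G := Gd.r '' (Gd.s ⁻¹' {z})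

/-- A groupoid is principal if `γ ↦ (r γ, s γ)` is injective. -/
def Principal : Prop := Function.Injective (fun γ => (Gd.r γ, Gd.s γ))

/-- Product of two subsets of the groupoid: all products of composable pairs. -/
def setMul (A B : Set G) : Set G :=
  {x | ∃ γ ∈ A, ∃ α ∈ B, Gd.s γ = Gd.r α ∧ x = Gd.mul γ α}

/-- Powers of a subset with respect to `setMul`; `A ^ 1 = A`. -/
def setPow (A : Set G) : ℕ → Set G
  | 0 => Gd.units
  | n+1 => Gd.setMul A (setPow A n)

/-- A set `W ⊆ G` is conditionally compact if `WV` and `VW` are relatively compact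
for every compact `V ⊆ G`. -/
def CondCompact (W : Set G) : Prop :=
  ∀ V : Set G, IsCompact V →
    IsCompact (closure (Gd.setMul W V)) ∧ IsCompact (closure (Gd.setMul V W))

/-- A sequence `x : ℕ → G` (in the unit space) converges `k`-times in `G⁰/G` to `z`. -/
def ConvergesKTimes (x : ℕ → G) (z : G) (k : ℕ) : Prop :=
  ∃ γ : Fin k → ℕ → G,
    (∀ i n, Gd.s (γ i n) = x n) ∧
    (∀ i, Tendsto (fun n => Gd.r (γ i n)) atTop (𝓝 z)) ∧
    (∀ i j : Fin k, i < j →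
      Tendsto (fun n => Gd.mul (γ j n) (Gd.inv (γ i n))) atTop (cocompact G))

end TopGroupoid

/-- A left Haar system on a topological groupoid: a family of Radon measures `λˣ`
with support `r⁻¹{x}`, continuous in `x`, and left invariant. -/
structure HaarSystem {G : Type*} [TopologicalSpace G] [MeasurableSpace G]
    (Gd : TopGroupoid G) where
  lam : G → Measure G
  regular : ∀ x, (lam x).Regular
  supp_subset : ∀ x ∈ Gd.units, lam x {γ | Gd.r γ ≠ x} = 0
  supp_full : ∀ x ∈ Gd.units, ∀ U : Set G, IsOpen U →
      (U ∩ Gd.r ⁻¹' {x}).Nonempty → 0 < lam x U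
  continuous_int : ∀ f : G → ℝ, Continuous f → HasCompactSupport f →
      Continuous fun x => ∫ γ, f γ ∂(lam x)
  left_invariant : ∀ γ : G, ∀ f : G → ℝ, Continuous f → HasCompactSupport f →
      ∫ α, f (Gd.mul γ α) ∂(lam (Gd.s γ)) = ∫ α, f α ∂(lam (Gd.r γ))

namespace HaarSystem

variable {G : Type*} [TopologicalSpace G] [MeasurableSpace G]
  {Gd : TopGroupoid G} (HS : HaarSystem Gd)

/-- The associated right Haar system `λ_x(E) = λˣ(E⁻¹)`, supported on `s⁻¹{x}`. -/
noncomputable def rlam (x : G) : Measure G := (HS.lam x).map Gd.inv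

/-- The groupoid (with its Haar system) is integrable if
`sup_{x ∈ N} λˣ(s⁻¹ N) < ∞` for every compact `N ⊆ G⁰`. -/
def Integrable : Prop :=
  ∀ N : Set G, N ⊆ Gd.units → IsCompact N →
    (⨆ x ∈ N, HS.lam x (Gd.s ⁻¹' N)) < ⊤

/-- `G` fails to be integrable at `z` if `sup_{x ∈ U} λˣ(s⁻¹ U) = ∞` for every open
neighborhood `U` of `z` in `G⁰`. -/
def FailsIntegrableAt (z : G) : Prop :=
  ∀ U : Set G, IsOpen U → z ∈ U →
    (⨆ x ∈ U ∩ Gd.units, HS.lam x (Gd.s ⁻¹' (U ∩ Gd.units))) = ⊤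

end HaarSystem

/-!
The right Haar measure `λ_z` lives on `s⁻¹{z}` and is finite on compact sets, so (3) ⇒ (4).
If no return set `r⁻¹V ∩ s⁻¹{z}` is relatively compact, a greedy choice gives, for the `n`-th
neighbourhood of `z`, returns whose mutual quotients avoid the `n`-th compact set: (4) ⇒ (2).
Left invariance turns `k` such well separated arrows into `k` disjoint translates of the support
of a bump function at `z`, each of mass bounded below, so `λ_z(r⁻¹V) = ∞`: (2) ⇒ (3).
If some return set is relatively compact, its compact `r`-image together with the openness of
`r` onto `G⁰` (continuity of the Haar system) makes the orbit open in its closure. Conversely a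
locally closed orbit is a Baire space covered by the images of compact pieces of `s⁻¹{z}`; one
of them has interior, and principality turns it into a relatively compact return set.
-/

lemma CompactExhaustion.tendsto_cocompact_of_forall_notMem {X : Type*} [TopologicalSpace X]
    (K : CompactExhaustion X) {u : ℕ → X} (h : ∀ n, u n ∉ K n) :
    Tendsto u atTop (cocompact X) := by
  refine hasBasis_cocompact.tendsto_right_iff.2 fun C hC => ?_
  obtain ⟨m, hm⟩ := K.exists_superset_of_isCompact hC
  filter_upwards [eventually_ge_atTop m] with n hn hCn
  exact h n (K.subset hn (hm hCn))

lemma isLocallyClosed_preimage_val_iff {X : Type*} [TopologicalSpace X] {S O : Set X}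
    (hS : IsLocallyClosed S) (hO : O ⊆ S) :
    IsLocallyClosed (Subtype.val ⁻¹' O : Set S) ↔ IsLocallyClosed O := by
  refine ⟨fun h => ?_, fun h => h.preimage continuous_subtype_val⟩
  have := h.image Topology.IsInducing.subtypeVal (by rwa [Subtype.range_val])
  rwa [Subtype.image_preimage_coe, Set.inter_eq_right.2 hO] at this

namespace TopGroupoid

variable {G : Type*} [TopologicalSpace G] (Gd : TopGroupoid G)

/-- Condition (4) of the theorem. -/
def HasUnboundedReturns (z : G) : Prop :=
  ∀ V : Set G, IsOpen V → z ∈ V →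
    ¬ IsCompact (closure (Gd.r ⁻¹' (V ∩ Gd.units) ∩ Gd.s ⁻¹' {z}))

/-- The translate `δ⁻¹ K`, made of the arrows composable with `δ`. -/
def preimageMulLeft (δ : G) (K : Set G) : Set G :=
  {α | Gd.r α = Gd.s δ ∧ Gd.mul δ α ∈ K}

variable {Gd}

lemma r_mem_units (γ : G) : Gd.r γ ∈ Gd.units := ⟨γ, rfl⟩

lemma s_mem_units (γ : G) : Gd.s γ ∈ Gd.units := ⟨Gd.inv γ, Gd.r_inv γ⟩

lemma r_r (γ : G) : Gd.r (Gd.r γ) = Gd.r γ := by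
  simpa only [Gd.mul_inv'] using Gd.r_mul γ (Gd.inv γ) (Gd.r_inv γ).symm

lemma s_r (γ : G) : Gd.s (Gd.r γ) = Gd.r γ := by
  simpa only [Gd.mul_inv', Gd.s_inv] using Gd.s_mul γ (Gd.inv γ) (Gd.r_inv γ).symm

lemma r_of_mem_units {x : G} (hx : x ∈ Gd.units) : Gd.r x = x := by
  obtain ⟨γ, rfl⟩ := hx
  exact r_r γ

lemma s_of_mem_units {x : G} (hx : x ∈ Gd.units) : Gd.s x = x := by
  obtain ⟨γ, rfl⟩ := hx
  exact s_r γ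

lemma r_preimage_inter_units (V : Set G) : Gd.r ⁻¹' (V ∩ Gd.units) = Gd.r ⁻¹' V := by
  ext γ
  simp [r_mem_units γ]

lemma mul_inv_mul_cancel {a b : G} (h : Gd.s a = Gd.s b) :
    Gd.mul (Gd.mul a (Gd.inv b)) b = a := by
  rw [Gd.mul_assoc' a (Gd.inv b) b (by rw [Gd.r_inv, h]) (Gd.s_inv b), Gd.inv_mul', ← h,
    Gd.mul_unit]

lemma inv_mul_cancel_left {a b : G} (h : Gd.s a = Gd.r b) :
    Gd.mul (Gd.inv a) (Gd.mul a b) = b := by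
  rw [← Gd.mul_assoc' (Gd.inv a) a b (Gd.s_inv a) h, Gd.inv_mul', h, Gd.unit_mul]

lemma mul_mul_inv_cancel {a b : G} (h : Gd.s a = Gd.r b) :
    Gd.mul (Gd.mul a b) (Gd.inv b) = a := by
  rw [Gd.mul_assoc' a b (Gd.inv b) h (Gd.r_inv b).symm, Gd.mul_inv', ← h, Gd.mul_unit]

lemma mul_mul_inv_mul_mul {a b α : G} (ha : Gd.s a = Gd.r α) (hb : Gd.s b = Gd.r α) :
    Gd.mul (Gd.mul b α) (Gd.inv (Gd.mul a α)) = Gd.mul b (Gd.inv a) := by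
  have hba : Gd.s (Gd.mul b (Gd.inv a)) = Gd.r a := by
    rw [Gd.s_mul _ _ (by rw [Gd.r_inv, ha, hb]), Gd.s_inv]
  conv_lhs => rw [← mul_inv_mul_cancel (hb.trans ha.symm)]
  rw [Gd.mul_assoc' _ a α hba ha, mul_mul_inv_cancel (by rw [Gd.r_mul _ _ ha, hba])]

lemma Principal.eq_of_r_eq_of_s_eq (hpr : Gd.Principal) {a b : G} (hr : Gd.r a = Gd.r b)
    (hs : Gd.s a = Gd.s b) : a = b :=
  hpr (Prod.ext hr hs)

lemma mul_mem_setMul {A B : Set G} {a b : G} (ha : a ∈ A) (hb : b ∈ B) (h : Gd.s a = Gd.r b) :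
    Gd.mul a b ∈ Gd.setMul A B :=
  ⟨a, ha, b, hb, h, rfl⟩

lemma orbit_subset_units (z : G) : Gd.orbit z ⊆ Gd.units := by
  rintro _ ⟨γ, -, rfl⟩
  exact r_mem_units γ

lemma r_mem_orbit_of_s_mem_orbit {z γ : G} (hγ : Gd.s γ ∈ Gd.orbit z) : Gd.r γ ∈ Gd.orbit z := by
  obtain ⟨β, hβ, hβγ⟩ := hγ
  have hc : Gd.s γ = Gd.r β := hβγ.symm
  refine ⟨Gd.mul γ β, ?_, Gd.r_mul γ β hc⟩
  simpa [Gd.s_mul γ β hc] using hβ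

lemma isClosed_units [T2Space G] : IsClosed Gd.units := by
  have : Gd.units = {γ | Gd.r γ = γ} :=
    Set.ext fun γ => ⟨r_of_mem_units, fun h => ⟨γ, h⟩⟩
  rw [this]
  exact isClosed_eq Gd.continuous_r continuous_id

lemma isCompact_setMul [T2Space G] {A B : Set G} (hA : IsCompact A) (hB : IsCompact B) :
    IsCompact (Gd.setMul A B) := by
  have hcl : IsClosed {p : G × G | Gd.s p.1 = Gd.r p.2} :=
    isClosed_eq (Gd.continuous_s.comp continuous_fst) (Gd.continuous_r.comp continuous_snd)
  have himg : Gd.setMul A B =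
      (fun p : G × G => Gd.mul p.1 p.2) '' (A ×ˢ B ∩ {p | Gd.s p.1 = Gd.r p.2}) := by
    ext x
    constructor
    · rintro ⟨a, ha, b, hb, hc, rfl⟩
      exact ⟨(a, b), ⟨⟨ha, hb⟩, hc⟩, rfl⟩
    · rintro ⟨⟨a, b⟩, ⟨⟨ha, hb⟩, hc⟩, rfl⟩
      exact ⟨a, ha, b, hb, hc, rfl⟩
  rw [himg]
  exact ((hA.prod hB).inter_right hcl).image_of_continuousOn
    (Gd.continuous_mul.mono Set.inter_subset_right)

lemma isClosed_preimageMulLeft [T2Space G] (δ : G) {K : Set G} (hK : IsClosed K) :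
    IsClosed (Gd.preimageMulLeft δ K) := by
  have hc : ContinuousOn (Gd.mul δ) {α | Gd.r α = Gd.s δ} :=
    Gd.continuous_mul.comp (continuous_const.prodMk continuous_id).continuousOn
      fun α (hα : Gd.r α = Gd.s δ) => hα.symm
  exact hc.preimage_isClosed_of_isClosed (isClosed_eq Gd.continuous_r continuous_const) hK

lemma preimageMulLeft_subset_s_preimage (δ : G) {K V : Set G} (hKV : K ⊆ Gd.s ⁻¹' V) :
    Gd.preimageMulLeft δ K ⊆ Gd.s ⁻¹' V := fun α ⟨hα, hδα⟩ => by
  simpa [Gd.s_mul δ α hα.symm] using hKV hδα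

lemma disjoint_preimageMulLeft {a b : G} {K : Set G} (hab : Gd.s a = Gd.s b)
    (hsep : Gd.mul b (Gd.inv a) ∉ Gd.setMul K (Gd.inv '' K)) :
    Disjoint (Gd.preimageMulLeft a K) (Gd.preimageMulLeft b K) := by
  refine Set.disjoint_left.2 fun α ⟨hαa, haα⟩ ⟨_, hbα⟩ => hsep ?_
  rw [← mul_mul_inv_mul_mul hαa.symm (hab ▸ hαa.symm)]
  refine mul_mem_setMul hbα ⟨_, haα, rfl⟩ ?_
  rw [Gd.s_mul _ _ (hab ▸ hαa.symm), Gd.r_inv, Gd.s_mul _ _ hαa.symm]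

lemma ConvergesKTimes.exists_separated {x : ℕ → G} {z : G} {k : ℕ}
    (h : Gd.ConvergesKTimes x z k) {U : Set G} (hU : U ∈ 𝓝 z) {Q : Set G} (hQ : IsCompact Q) :
    ∃ n, ∃ δ : Fin k → G, (∀ i, Gd.s (δ i) = x n) ∧ (∀ i, Gd.r (δ i) ∈ U) ∧
      ∀ i j, i < j → Gd.mul (δ j) (Gd.inv (δ i)) ∉ Q := by
  obtain ⟨γ, hγs, hγr, hγ⟩ := h
  have hr : ∀ᶠ n in atTop, ∀ i, Gd.r (γ i n) ∈ U := eventually_all.2 fun i => hγr i hU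
  have hsep : ∀ᶠ n in atTop, ∀ i j, i < j → Gd.mul (γ j n) (Gd.inv (γ i n)) ∉ Q :=
    eventually_all.2 fun i => eventually_all.2 fun j => eventually_imp_distrib_left.2 fun hij =>
      hasBasis_cocompact.tendsto_right_iff.1 (hγ i j hij) Q hQ
  obtain ⟨n, hnr, hnsep⟩ := (hr.and hsep).exists
  exact ⟨n, fun i => γ i n, fun i => hγs i n, hnr, hnsep⟩

lemma exists_seq_forall_mul_inv_notMem [T2Space G] {z : G} {A C : Set G}
    (hA : ¬ IsCompact (closure A)) (hAz : A ⊆ Gd.s ⁻¹' {z}) (hC : IsCompact C) :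
    ∃ e : ℕ → G, (∀ n, e n ∈ A) ∧ ∀ m n, m < n → Gd.mul (e n) (Gd.inv (e m)) ∉ C := by
  refine exists_seq_of_forall_finset_exists (· ∈ A) (fun a b => Gd.mul b (Gd.inv a) ∉ C)
    fun t ht => ?_
  have hcpt : IsCompact (⋃ x ∈ t, Gd.setMul C {x}) :=
    t.isCompact_biUnion fun x _ => isCompact_setMul hC isCompact_singleton
  obtain ⟨a, ha, haC⟩ := Set.not_subset.1 (mt hcpt.closure_of_subset hA)
  refine ⟨a, ha, fun x hx hmem => haC (Set.mem_biUnion hx ?_)⟩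
  have hax : Gd.s a = Gd.s x := (hAz ha).trans (hAz (ht x hx)).symm
  rw [← mul_inv_mul_cancel hax]
  refine mul_mem_setMul hmem rfl ?_
  rw [Gd.s_mul _ _ (by rw [Gd.r_inv, hax]), Gd.s_inv]

/-- (4) ⇒ (2): the `i`-th sequence picks the `i`-th term of a sequence in the return set of
the `n`-th neighbourhood of `z` whose quotients avoid the `n`-th compact set. -/
lemma HasUnboundedReturns.convergesKTimes [T2Space G] [LocallyCompactSpace G]
    [SecondCountableTopology G] {z : G} (h4 : Gd.HasUnboundedReturns z) (k : ℕ) :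
    Gd.ConvergesKTimes (fun _ => z) z k := by
  obtain ⟨V, hV, hVbasis⟩ := (nhds_basis_opens z).exists_antitone_subbasis
  let K := CompactExhaustion.choice G
  choose e he hsep using fun n => exists_seq_forall_mul_inv_notMem
    (h4 (V n) (hV n).2 (hV n).1) Set.inter_subset_right (K.isCompact n)
  refine ⟨fun i n => e n i, fun i n => (he n i).2, fun i => hVbasis.tendsto fun n => (he n i).1.1,
    fun i j hij => K.tendsto_cocompact_of_forall_notMem fun n => hsep n i j hij⟩

lemma inter_closure_orbit_subset_orbit [T2Space G] {z : G} {V : Set G} (hV : IsOpen V)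
    (hK : IsCompact (closure (Gd.r ⁻¹' (V ∩ Gd.units) ∩ Gd.s ⁻¹' {z}))) :
    V ∩ closure (Gd.orbit z) ⊆ Gd.orbit z := by
  set C := closure (Gd.r ⁻¹' (V ∩ Gd.units) ∩ Gd.s ⁻¹' {z})
  have hCz : C ⊆ Gd.s ⁻¹' {z} :=
    closure_minimal Set.inter_subset_right (isClosed_singleton.preimage Gd.continuous_s)
  have hVO : V ∩ Gd.orbit z ⊆ Gd.r '' C := by
    rintro _ ⟨hyV, β, hβ, rfl⟩
    exact ⟨β, subset_closure ⟨⟨hyV, r_mem_units β⟩, hβ⟩, rfl⟩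
  calc V ∩ closure (Gd.orbit z) ⊆ closure (V ∩ Gd.orbit z) := hV.inter_closure
    _ ⊆ Gd.r '' C := closure_minimal hVO (hK.image Gd.continuous_r).isClosed
    _ ⊆ Gd.orbit z := Set.image_mono hCz

/-- Baire category theorem on the orbit, which is locally compact: some compact piece of
`s⁻¹{z}` has `r`-image with nonempty interior in the orbit, and principality lets this piece
contain every arrow from `z` into that interior. -/
lemma exists_r_preimage_inter_s_preimage_subset_isCompact [T2Space G] [LocallyCompactSpace G]
    [SecondCountableTopology G] (hpr : Gd.Principal) {z : G} (hz : z ∈ Gd.units)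
    (hLC : IsLocallyClosed (Gd.orbit z)) :
    ∃ γ₀ W K, Gd.s γ₀ = z ∧ IsOpen W ∧ Gd.r γ₀ ∈ W ∧ IsCompact K ∧
      Gd.r ⁻¹' W ∩ Gd.s ⁻¹' {z} ⊆ K := by
  have := hLC.locallyCompactSpace
  have : Nonempty (Gd.orbit z) := ⟨⟨z, z, by simp [s_of_mem_units hz], r_of_mem_units hz⟩⟩
  let K := CompactExhaustion.choice G
  let D : ℕ → Set (Gd.orbit z) := fun n => Subtype.val ⁻¹' (Gd.r '' (K n ∩ Gd.s ⁻¹' {z}))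
  have hD : ∀ n, IsClosed (D n) := fun n =>
    (((K.isCompact n).inter_right (isClosed_singleton.preimage Gd.continuous_s)).image
      Gd.continuous_r).isClosed.preimage continuous_subtype_val
  have hDcover : ⋃ n, D n = Set.univ := by
    refine Set.eq_univ_of_forall fun ⟨_, β, hβ, hβr⟩ => ?_
    obtain ⟨n, hn⟩ := K.exists_mem β
    exact Set.mem_iUnion.2 ⟨n, β, ⟨hn, hβ⟩, hβr⟩
  obtain ⟨m, p, hp⟩ := nonempty_interior_of_iUnion_of_closed hD hDcover
  obtain ⟨W, hW, hWD⟩ := isOpen_induced_iff.1 (isOpen_interior (s := D m))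
  obtain ⟨γ₀, hγ₀, hγ₀p⟩ := p.2
  refine ⟨γ₀, W, K m, hγ₀, hW, ?_, K.isCompact m, ?_⟩
  · rw [hγ₀p]
    change p ∈ Subtype.val ⁻¹' W
    rwa [hWD]
  · rintro α ⟨hαW, hα⟩
    have hαD : (⟨Gd.r α, α, hα, rfl⟩ : Gd.orbit z) ∈ D m :=
      interior_subset (by rw [← hWD]; exact hαW)
    obtain ⟨κ, ⟨hκ, hκz⟩, hκα⟩ := hαD
    rwa [← hpr.eq_of_r_eq_of_s_eq hκα (hκz.trans hα.symm)]

end TopGroupoid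

namespace HaarSystem

open TopGroupoid

variable {G : Type*} [TopologicalSpace G] [MeasurableSpace G] {Gd : TopGroupoid G}

lemma ofReal_integral_le_lam_preimageMulLeft (HS : HaarSystem Gd) (δ : G) {f : G → ℝ}
    (hf : Continuous f) (hfc : HasCompactSupport f) (hf1 : ∀ x, f x ≤ 1) :
    ENNReal.ofReal (∫ γ, f γ ∂(HS.lam (Gd.r δ))) ≤
      HS.lam (Gd.s δ) (Gd.preimageMulLeft δ (tsupport f)) := by
  have hae : (fun α => f (Gd.mul δ α)) =ᵐ[HS.lam (Gd.s δ)]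
      {α | Gd.r α = Gd.s δ}.indicator fun α => f (Gd.mul δ α) := by
    filter_upwards [measure_eq_zero_iff_ae_notMem.1 (HS.supp_subset _ (s_mem_units δ))]
      with α hα
    simp_all
  rw [← HS.left_invariant δ f hf hfc, integral_congr_ae hae]
  refine integral_le_measure (fun α _ => ?_) fun α hα => ?_
  · by_cases hα : Gd.r α = Gd.s δ <;> simp [hα, hf1]
  · by_cases hαδ : Gd.r α = Gd.s δ
    · simp [hαδ, image_eq_zero_of_notMem_tsupport fun h => hα ⟨hαδ, h⟩]
    · simp [hαδ]

variable [BorelSpace G]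

lemma integral_pos_iff (HS : HaarSystem Gd) {x : G} (hx : x ∈ Gd.units) {f : G → ℝ}
    (hf : Continuous f) (hfc : HasCompactSupport f) (hf0 : 0 ≤ f) :
    0 < ∫ γ, f γ ∂(HS.lam x) ↔ ∃ γ, Gd.r γ = x ∧ f γ ≠ 0 := by
  have := HS.regular x
  rw [integral_pos_iff_support_of_nonneg hf0 (hf.integrable_of_hasCompactSupport hfc)]
  constructor
  · intro hpos
    by_contra! hcon
    refine hpos.ne' (measure_mono_null (fun γ hγ => ?_) (HS.supp_subset x hx))
    exact fun hr => hγ (hcon γ hr)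
  · rintro ⟨γ, hγr, hγf⟩
    exact HS.supp_full x hx _ hf.isOpen_support ⟨γ, hγf, hγr⟩

lemma rlam_apply (HS : HaarSystem Gd) (x : G) {E : Set G} (hE : MeasurableSet E) :
    HS.rlam x E = HS.lam x (Gd.inv ⁻¹' E) :=
  Measure.map_apply Gd.continuous_inv.measurable hE

lemma rlam_r_preimage (HS : HaarSystem Gd) (x : G) {V : Set G} (hV : MeasurableSet V) :
    HS.rlam x (Gd.r ⁻¹' V) = HS.lam x (Gd.s ⁻¹' V) := by
  rw [HS.rlam_apply x (hV.preimage Gd.continuous_r.measurable), ← Set.preimage_comp]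
  congr 2
  exact funext Gd.r_inv

variable [T2Space G]

/-- `r` is an open map from `G` onto the unit space: this is where the continuity of the
Haar system enters. -/
lemma exists_isOpen_inter_units_subset_r_image [LocallyCompactSpace G]
    (HS : HaarSystem Gd) {U : Set G} (hU : IsOpen U) {γ : G} (hγ : γ ∈ U) :
    ∃ N : Set G, IsOpen N ∧ Gd.r γ ∈ N ∧ N ∩ Gd.units ⊆ Gd.r '' U := by
  obtain ⟨f, hfγ, hfc, hfU, hf01⟩ :=
    exists_continuousMap_one_of_isCompact_subset_isOpen isCompact_singleton hU
      (Set.singleton_subset_iff.2 hγ)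
  have hf0 : 0 ≤ (f : G → ℝ) := fun x => (hf01 x).1
  refine ⟨{x | 0 < ∫ α, f α ∂(HS.lam x)},
    isOpen_lt continuous_const (HS.continuous_int f f.continuous hfc), ?_, ?_⟩
  · refine (HS.integral_pos_iff (r_mem_units γ) f.continuous hfc hf0).2 ⟨γ, rfl, ?_⟩
    simp [hfγ (Set.mem_singleton γ)]
  · rintro x ⟨hxpos, hx⟩
    obtain ⟨α, hαr, hαf⟩ := (HS.integral_pos_iff hx f.continuous hfc hf0).1 hxpos
    exact ⟨α, hfU (subset_tsupport f hαf), hαr⟩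

lemma exists_isOpen_inter_units_subset_s_image [LocallyCompactSpace G]
    (HS : HaarSystem Gd) {U : Set G} (hU : IsOpen U) {γ : G} (hγ : γ ∈ U) :
    ∃ N : Set G, IsOpen N ∧ Gd.s γ ∈ N ∧ N ∩ Gd.units ⊆ Gd.s '' U := by
  obtain ⟨N, hN, hγN, hNU⟩ := HS.exists_isOpen_inter_units_subset_r_image
    (hU.preimage Gd.continuous_inv) (show Gd.inv γ ∈ Gd.inv ⁻¹' U by simpa [Gd.inv_inv'])
  refine ⟨N, hN, Gd.r_inv γ ▸ hγN, fun x hx => ?_⟩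
  obtain ⟨α, hα, rfl⟩ := hNU hx
  exact ⟨Gd.inv α, hα, Gd.s_inv α⟩

lemma exists_isOpen_inter_units_eq_r_image [LocallyCompactSpace G]
    (HS : HaarSystem Gd) {U : Set G} (hU : IsOpen U) :
    ∃ N : Set G, IsOpen N ∧ N ∩ Gd.units = Gd.r '' U := by
  choose N hN hγN hNU using fun γ : U => HS.exists_isOpen_inter_units_subset_r_image hU γ.2
  refine ⟨⋃ γ, N γ, isOpen_iUnion hN, Set.Subset.antisymm ?_ ?_⟩
  · rintro x ⟨hx, hxu⟩
    obtain ⟨γ, hγ⟩ := Set.mem_iUnion.1 hx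
    exact hNU γ ⟨hγ, hxu⟩
  · rintro _ ⟨γ, hγ, rfl⟩
    exact ⟨Set.mem_iUnion.2 ⟨⟨γ, hγ⟩, hγN _⟩, r_mem_units γ⟩

lemma r_mem_closure_orbit [LocallyCompactSpace G] (HS : HaarSystem Gd) {z γ : G}
    (hγ : Gd.s γ ∈ closure (Gd.orbit z)) : Gd.r γ ∈ closure (Gd.orbit z) := by
  rw [mem_closure_iff] at hγ ⊢
  intro W hW hγW
  obtain ⟨N, hN, hγN, hNW⟩ :=
    HS.exists_isOpen_inter_units_subset_s_image (hW.preimage Gd.continuous_r) hγW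
  obtain ⟨y, hyN, hyO⟩ := hγ N hN hγN
  obtain ⟨η, hηW, rfl⟩ := hNW ⟨hyN, orbit_subset_units z hyO⟩
  exact ⟨Gd.r η, hηW, r_mem_orbit_of_s_mem_orbit hyO⟩

lemma rlam_compl_s_preimage (HS : HaarSystem Gd) {x : G} (hx : x ∈ Gd.units) :
    HS.rlam x (Gd.s ⁻¹' {x})ᶜ = 0 := by
  have hmeas : MeasurableSet (Gd.s ⁻¹' {x}) :=
    isClosed_singleton.measurableSet.preimage Gd.continuous_s.measurable
  rw [HS.rlam_apply x hmeas.compl, ← Set.preimage_compl, ← Set.preimage_comp]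
  convert HS.supp_subset x hx using 2
  ext γ
  simp [Gd.s_inv]

lemma rlam_lt_top_of_isCompact (HS : HaarSystem Gd) (x : G) {K : Set G}
    (hK : IsCompact K) : HS.rlam x K < ⊤ := by
  have := HS.regular x
  rw [HS.rlam_apply x hK.measurableSet,
    ← Set.image_eq_preimage_of_inverse Gd.inv_inv' Gd.inv_inv']
  exact (hK.image Gd.continuous_inv).measure_lt_top

lemma hasUnboundedReturns_of_rlam_eq_top (HS : HaarSystem Gd) {z : G} (hz : z ∈ Gd.units)
    (h3 : ∀ V : Set G, IsOpen V → z ∈ V → HS.rlam z (Gd.r ⁻¹' (V ∩ Gd.units)) = ⊤) :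
    Gd.HasUnboundedReturns z := by
  intro V hV hzV hK
  refine (h3 V hV hzV).not_lt ?_
  calc HS.rlam z (Gd.r ⁻¹' (V ∩ Gd.units))
      = HS.rlam z (Gd.r ⁻¹' (V ∩ Gd.units) ∩ Gd.s ⁻¹' {z}) :=
        (measure_inter_conull (HS.rlam_compl_s_preimage hz)).symm
    _ ≤ HS.rlam z (closure (Gd.r ⁻¹' (V ∩ Gd.units) ∩ Gd.s ⁻¹' {z})) :=
        measure_mono subset_closure
    _ < ⊤ := HS.rlam_lt_top_of_isCompact z hK

lemma natCast_mul_le_lam_iUnion_preimageMulLeft (HS : HaarSystem Gd) {z : G} {k : ℕ}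
    {f : G → ℝ} (hf : Continuous f) (hfc : HasCompactSupport f) (hf1 : ∀ x, f x ≤ 1)
    {c : ℝ≥0∞} {δ : Fin k → G} (hδ : ∀ i, Gd.s (δ i) = z)
    (hc : ∀ i, c ≤ ENNReal.ofReal (∫ γ, f γ ∂(HS.lam (Gd.r (δ i)))))
    (hsep : ∀ i j, i < j →
      Gd.mul (δ j) (Gd.inv (δ i)) ∉ Gd.setMul (tsupport f) (Gd.inv '' tsupport f)) :
    (k : ℝ≥0∞) * c ≤ HS.lam z (⋃ i, Gd.preimageMulLeft (δ i) (tsupport f)) := by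
  have hdisj :
      Pairwise (Function.onFun Disjoint fun i => Gd.preimageMulLeft (δ i) (tsupport f)) := by
    intro i j hij
    rcases hij.lt_or_gt with h | h
    · exact disjoint_preimageMulLeft ((hδ i).trans (hδ j).symm) (hsep i j h)
    · exact (disjoint_preimageMulLeft ((hδ j).trans (hδ i).symm) (hsep j i h)).symm
  rw [measure_iUnion hdisj
    fun i => (isClosed_preimageMulLeft _ (isClosed_tsupport f)).measurableSet, tsum_fintype]
  calc (k : ℝ≥0∞) * c = ∑ _ : Fin k, c := by simp
    _ ≤ _ := Finset.sum_le_sum fun i _ =>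
      (hc i).trans (hδ i ▸ HS.ofReal_integral_le_lam_preimageMulLeft (δ i) hf hfc hf1)

/-- (2) ⇒ (3): a bump `f` at `z` supported in `s⁻¹ V` has `k` translates by well separated arrows
`δ i` from `z`, with disjoint supports, each carrying mass at least half of `∫ f dλ^z`. -/
lemma lam_s_preimage_eq_top (HS : HaarSystem Gd) [LocallyCompactSpace G] {z : G}
    (hz : z ∈ Gd.units) (h2 : ∀ k : ℕ, 1 ≤ k → Gd.ConvergesKTimes (fun _ => z) z k)
    {V : Set G} (hV : IsOpen V) (hzV : z ∈ V) : HS.lam z (Gd.s ⁻¹' V) = ⊤ := by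
  obtain ⟨f, hfz, hfc, hfV, hf01⟩ := exists_continuousMap_one_of_isCompact_subset_isOpen
    (isCompact_singleton (x := z)) (hV.preimage Gd.continuous_s)
    (by simpa [s_of_mem_units hz] using hzV)
  set c₀ := ∫ γ, f γ ∂(HS.lam z)
  have hc₀ : 0 < c₀ := (HS.integral_pos_iff hz f.continuous hfc fun x => (hf01 x).1).2
    ⟨z, r_of_mem_units hz, by simp [hfz (Set.mem_singleton z)]⟩
  have hU : {x | c₀ / 2 < ∫ γ, f γ ∂(HS.lam x)} ∈ 𝓝 z :=
    (isOpen_lt continuous_const (HS.continuous_int f f.continuous hfc)).mem_nhds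
      (show c₀ / 2 < c₀ by linarith)
  have hbound : ∀ k : ℕ, 1 ≤ k → (k : ℝ≥0∞) * ENNReal.ofReal (c₀ / 2) ≤ HS.lam z (Gd.s ⁻¹' V) := by
    intro k hk
    obtain ⟨_, δ, hδz, hδU, hsep⟩ :=
      (h2 k hk).exists_separated hU (isCompact_setMul hfc (hfc.image Gd.continuous_inv))
    refine (HS.natCast_mul_le_lam_iUnion_preimageMulLeft f.continuous hfc (fun x => (hf01 x).2)
      hδz (fun i => ENNReal.ofReal_le_ofReal (hδU i).le) hsep).trans (measure_mono ?_)
    exact Set.iUnion_subset fun i => preimageMulLeft_subset_s_preimage _ hfV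
  by_contra hne
  obtain ⟨n, hn⟩ := ENNReal.exists_nat_mul_gt (ENNReal.ofReal_pos.2 (half_pos hc₀)).ne' hne
  have hn1 : 1 ≤ n := Nat.one_le_iff_ne_zero.2 fun h => by simp [h] at hn
  exact (hbound n hn1).not_gt hn

lemma rlam_r_preimage_eq_top (HS : HaarSystem Gd) [LocallyCompactSpace G] {z : G}
    (hz : z ∈ Gd.units) (h2 : ∀ k : ℕ, 1 ≤ k → Gd.ConvergesKTimes (fun _ => z) z k)
    {V : Set G} (hV : IsOpen V) (hzV : z ∈ V) : HS.rlam z (Gd.r ⁻¹' (V ∩ Gd.units)) = ⊤ := by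
  rw [r_preimage_inter_units, HS.rlam_r_preimage z hV.measurableSet]
  exact HS.lam_s_preimage_eq_top hz h2 hV hzV

/-- The orbit is cut out of its closure by the open saturation of `s⁻¹ V`. -/
lemma isLocallyClosed_orbit_of_not_hasUnboundedReturns [LocallyCompactSpace G]
    (HS : HaarSystem Gd) {z : G} (h : ¬ Gd.HasUnboundedReturns z) :
    IsLocallyClosed (Gd.orbit z) := by
  obtain ⟨V, hV, hzV, hK⟩ : ∃ V : Set G, IsOpen V ∧ z ∈ V ∧
      IsCompact (closure (Gd.r ⁻¹' (V ∩ Gd.units) ∩ Gd.s ⁻¹' {z})) := by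
    simpa [HasUnboundedReturns] using h
  obtain ⟨U, hU, hUV⟩ := HS.exists_isOpen_inter_units_eq_r_image (hV.preimage Gd.continuous_s)
  have hOU : Gd.orbit z ⊆ U := by
    rintro _ ⟨β, hβ, rfl⟩
    have hβV : β ∈ Gd.s ⁻¹' V := by simpa [Set.mem_singleton_iff.1 hβ] using hzV
    exact (hUV.symm ▸ ⟨β, hβV, rfl⟩ : Gd.r β ∈ U ∩ Gd.units).1
  refine ⟨U, closure (Gd.orbit z), hU, isClosed_closure,
    Set.Subset.antisymm (fun y hy => ⟨hOU hy, subset_closure hy⟩) ?_⟩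
  rintro y ⟨hyU, hy⟩
  obtain ⟨η, hηV, rfl⟩ : y ∈ Gd.r '' (Gd.s ⁻¹' V) :=
    hUV ▸ ⟨hyU, closure_minimal (orbit_subset_units z) isClosed_units hy⟩
  have hηO : Gd.s η ∈ closure (Gd.orbit z) := by
    simpa [Gd.r_inv] using HS.r_mem_closure_orbit (γ := Gd.inv η) (by rwa [Gd.s_inv])
  exact r_mem_orbit_of_s_mem_orbit (inter_closure_orbit_subset_orbit hV hK ⟨hηV, hηO⟩)

/-- Translating by arrows `η` near `γ₀`, with `s η` running over a neighbourhood of `z`,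
carries the returns to `z` into `K`. -/
lemma not_hasUnboundedReturns_of_r_preimage_inter_s_preimage_subset [LocallyCompactSpace G]
    (HS : HaarSystem Gd) {z γ₀ : G} {W K : Set G} (hγ₀ : Gd.s γ₀ = z) (hW : IsOpen W)
    (hγ₀W : Gd.r γ₀ ∈ W) (hK : IsCompact K) (hWK : Gd.r ⁻¹' W ∩ Gd.s ⁻¹' {z} ⊆ K) :
    ¬ Gd.HasUnboundedReturns z := by
  obtain ⟨Q, hQ, hγ₀Q, hQW⟩ := exists_compact_subset (hW.preimage Gd.continuous_r) hγ₀W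
  obtain ⟨N, hN, hzN, hNQ⟩ := HS.exists_isOpen_inter_units_subset_s_image isOpen_interior hγ₀Q
  rw [hγ₀] at hzN
  intro h4
  have hQK : IsCompact (Gd.setMul (Gd.inv '' Q) K) :=
    isCompact_setMul (hQ.image Gd.continuous_inv) hK
  refine h4 N hN hzN (hQK.closure_of_subset ?_)
  rintro α ⟨hαN, hα⟩
  obtain ⟨η, hηQ, hηα⟩ := hNQ hαN
  have hηαK : Gd.mul η α ∈ K :=
    hWK ⟨by simpa [Gd.r_mul _ _ hηα] using hQW (interior_subset hηQ),
      by simpa [Gd.s_mul _ _ hηα] using hα⟩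
  rw [← inv_mul_cancel_left hηα]
  exact mul_mem_setMul ⟨η, interior_subset hηQ, rfl⟩ hηαK (by rw [Gd.s_inv, Gd.r_mul _ _ hηα])

lemma not_isLocallyClosed_orbit_of_hasUnboundedReturns [LocallyCompactSpace G]
    [SecondCountableTopology G]
    (HS : HaarSystem Gd) (hpr : Gd.Principal) {z : G} (hz : z ∈ Gd.units)
    (h4 : Gd.HasUnboundedReturns z) : ¬ IsLocallyClosed (Gd.orbit z) := fun hLC =>
  let ⟨_, _, _, hγ₀, hW, hγ₀W, hK, hWK⟩ :=
    exists_r_preimage_inter_s_preimage_subset_isCompact hpr hz hLC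
  HS.not_hasUnboundedReturns_of_r_preimage_inter_s_preimage_subset hγ₀ hW hγ₀W hK hWK h4

end HaarSystem

/-- equivalence of (1) `[z]` not locally closed, (2) the constant sequence
converges `k`-times to `z` for all `k ≥ 1`, (3) `λ_z(r⁻¹ V) = ∞` for all open neighborhoods
`V` of `z` in `G⁰`, (4) `r⁻¹(V) ∩ s⁻¹{z}` is not relatively compact for all such `V`. -/
theorem stmt10 {G : Type*} [TopologicalSpace G] [T2Space G] [LocallyCompactSpace G]
    [SecondCountableTopology G] [MeasurableSpace G] [BorelSpace G]
    (Gd : TopGroupoid G) (HS : HaarSystem Gd) (hpr : Gd.Principal)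
    (z : G) (hz : z ∈ Gd.units) :
    ((¬ IsLocallyClosed (Subtype.val ⁻¹' Gd.orbit z : Set Gd.units)) ↔
      (∀ k : ℕ, 1 ≤ k → Gd.ConvergesKTimes (fun _ => z) z k)) ∧
    ((∀ k : ℕ, 1 ≤ k → Gd.ConvergesKTimes (fun _ => z) z k) ↔
      (∀ V : Set G, IsOpen V → z ∈ V →
        HS.rlam z (Gd.r ⁻¹' (V ∩ Gd.units)) = ⊤)) ∧
    ((∀ V : Set G, IsOpen V → z ∈ V →
        HS.rlam z (Gd.r ⁻¹' (V ∩ Gd.units)) = ⊤) ↔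
      (∀ V : Set G, IsOpen V → z ∈ V →
        ¬ IsCompact (closure (Gd.r ⁻¹' (V ∩ Gd.units) ∩ Gd.s ⁻¹' {z})))) := by
  have h41 : Gd.HasUnboundedReturns z ↔ ¬ IsLocallyClosed (Gd.orbit z) :=
    ⟨HS.not_isLocallyClosed_orbit_of_hasUnboundedReturns hpr hz,
      fun h => not_not.1 (mt HS.isLocallyClosed_orbit_of_not_hasUnboundedReturns h)⟩
  have h42 : Gd.HasUnboundedReturns z → ∀ k : ℕ, 1 ≤ k → Gd.ConvergesKTimes (fun _ => z) z k :=
    fun h k _ => h.convergesKTimes k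
  have h23 : (∀ k : ℕ, 1 ≤ k → Gd.ConvergesKTimes (fun _ => z) z k) →
      ∀ V : Set G, IsOpen V → z ∈ V → HS.rlam z (Gd.r ⁻¹' (V ∩ Gd.units)) = ⊤ :=
    fun h _ hV hzV => HS.rlam_r_preimage_eq_top hz h hV hzV
  have h34 := HS.hasUnboundedReturns_of_rlam_eq_top hz
  rw [isLocallyClosed_preimage_val_iff TopGroupoid.isClosed_units.isLocallyClosed
    (TopGroupoid.orbit_subset_units z), ← h41]
  exact ⟨⟨h42, h34 ∘ h23⟩, ⟨h23, h42 ∘ h34⟩, ⟨h34, h23 ∘ h42⟩⟩
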